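/- arXiv:1806.06186 — 3 statements merged into one kernel-verified Lean document; each statement's English description precedes it below -/
import Mathlib

section
/- Let (X,d) be a nonempty compact metric space, f : X → X a continuous, open, distance expanding, topologically transitive map, and φ : X → ℝ Hölder continuous. Then for every x₀ ∈ X the limit P(φ) := lim_{n→∞} (1/n)·log Σ_{x ∈ f^{−n}(x₀)} exp(S_nφ(x)) exists, and its value is independent of the choice of x₀ ∈ X. -/
set_option linter.unusedSectionVars false
set_option maxHeartbeats 1000000


open MeasureTheory Filter Metric Set Topology

/-- `f` is distance expanding: there are `lam > 1` and `η > 0` with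
`dist (f x) (f y) ≥ lam * dist x y` whenever `dist x y ≤ η`. -/
def DistanceExpanding {X : Type*} [MetricSpace X] (f : X → X) : Prop :=
  ∃ lam > (1 : ℝ), ∃ η > (0 : ℝ), ∀ x y : X, dist x y ≤ η →
    lam * dist x y ≤ dist (f x) (f y)

/-- `f` is topologically transitive: for all nonempty open `U, V` there is
`n ≥ 0` with `f^[n] '' U ∩ V ≠ ∅`. -/
def TopologicallyTransitive {X : Type*} [TopologicalSpace X] (f : X → X) : Prop :=
  ∀ U V : Set X, IsOpen U → IsOpen V → U.Nonempty → V.Nonempty →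
    ∃ n : ℕ, (f^[n] '' U ∩ V).Nonempty

/-- `φ` is Hölder continuous: `|φ x - φ y| ≤ C * dist x y ^ b` for some
`C > 0` and `b ∈ (0, 1]`. -/
def HolderPotential {X : Type*} [MetricSpace X] (φ : X → ℝ) : Prop :=
  ∃ C > (0 : ℝ), ∃ b ∈ Set.Ioc (0 : ℝ) 1, ∀ x y : X, |φ x - φ y| ≤ C * dist x y ^ b

/-- Birkhoff sum `S_n φ (x) = ∑_{j<n} φ (f^j x)`. -/
def birkhoffSum' {X : Type*} (f : X → X) (φ : X → ℝ) (n : ℕ) (x : X) : ℝ :=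
  ∑ j ∈ Finset.range n, φ (f^[j] x)

/-- The Bowen ball `B_n(x, r) = {y : dist (f^j x) (f^j y) < r for all 0 ≤ j ≤ n}`. -/
def bowenBall {X : Type*} [MetricSpace X] (f : X → X) (n : ℕ) (x : X) (r : ℝ) : Set X :=
  {y | ∀ j ≤ n, dist (f^[j] x) (f^[j] y) < r}

/-- The `n`-th level tree sum `∑_{x ∈ f^{-n}(x₀)} exp (S_n φ (x))`
(a `tsum` over the fiber, which is finite in the situations considered). -/
noncomputable def treeSum {X : Type*} (f : X → X) (φ : X → ℝ) (n : ℕ) (x₀ : X) : ℝ :=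
  ∑' x : (f^[n] ⁻¹' {x₀} : Set X), Real.exp (birkhoffSum' f φ n x)

section Main

variable {X : Type*} [MetricSpace X] [CompactSpace X] [Nonempty X]
variable (f : X → X) (φ : X → ℝ) {lam η : ℝ}


private lemma sep_lemma (hlam : 1 < lam)
    (hexp : ∀ x y : X, dist x y ≤ η → lam * dist x y ≤ dist (f x) (f y)) :
    ∀ n (x y : X), f^[n] x = f^[n] y → x ≠ y → ∃ k < n, η < dist (f^[k] x) (f^[k] y) := by
  intro n
  induction n with
  | zero => intro x y h hxy; simp at h; exact absurd h hxy
  | succ n ih =>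
    intro x y h hxy
    by_cases hfx : f x = f y
    · refine ⟨0, Nat.succ_pos n, ?_⟩
      simp only [Function.iterate_zero_apply]
      by_contra hle
      push_neg at hle
      have := hexp x y hle
      rw [hfx, dist_self] at this
      have : dist x y ≤ 0 := by nlinarith
      exact hxy (dist_le_zero.mp this)
    · rw [Function.iterate_succ_apply, Function.iterate_succ_apply] at h
      obtain ⟨k, hk, hd⟩ := ih (f x) (f y) h hfx
      refine ⟨k + 1, by omega, ?_⟩
      rwa [Function.iterate_succ_apply, Function.iterate_succ_apply]

private lemma modulus_lemma (hf : Continuous f) (hη : 0 < η) :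
    ∀ n : ℕ, ∃ δ > 0, ∀ x y : X, dist x y < δ → ∀ k ≤ n, dist (f^[k] x) (f^[k] y) ≤ η := by
  intro n
  induction n with
  | zero =>
    exact ⟨η, hη, fun x y hxy k hk => by
      interval_cases k; simpa using hxy.le⟩
  | succ n ih =>
    obtain ⟨δn, hδn, hmod⟩ := ih
    have hu : UniformContinuous f^[n + 1] :=
      CompactSpace.uniformContinuous_of_continuous (hf.iterate (n + 1))
    obtain ⟨δ', hδ', hδ'mod⟩ := Metric.uniformContinuous_iff.mp hu η hη
    refine ⟨min δn δ', lt_min hδn hδ', fun x y hxy k hk => ?_⟩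
    rcases Nat.lt_or_ge k (n + 1) with h | h
    · exact hmod x y (hxy.trans_le (min_le_left _ _)) k (by omega)
    · have : k = n + 1 := by omega
      subst this
      exact (hδ'mod (hxy.trans_le (min_le_right _ _))).le

private lemma fiber_finite (hf : Continuous f) (hlam : 1 < lam) (hη : 0 < η)
    (hexp : ∀ x y : X, dist x y ≤ η → lam * dist x y ≤ dist (f x) (f y))
    (n : ℕ) (x₀ : X) : (f^[n] ⁻¹' {x₀}).Finite := by
  obtain ⟨δ, hδ, hmod⟩ := modulus_lemma f hf hη n
  -- distinct fiber points are δ-separated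
  have hsep : ∀ x ∈ f^[n] ⁻¹' {x₀}, ∀ y ∈ f^[n] ⁻¹' {x₀}, x ≠ y → δ ≤ dist x y := by
    intro x hx y hy hxy
    by_contra hlt
    push_neg at hlt
    have h1 : f^[n] x = f^[n] y := by
      simp only [Set.mem_preimage, Set.mem_singleton_iff] at hx hy
      rw [hx, hy]
    obtain ⟨k, hk, hd⟩ := sep_lemma f hlam hexp n x y h1 hxy
    exact absurd (hmod x y hlt k hk.le) (not_le.mpr hd)
  -- finite δ/2-net
  obtain ⟨t, htf, htsub⟩ := (totallyBounded_iff.mp ((isCompact_univ (X := X)).totallyBounded)) (δ / 2)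
    (by linarith)
  have hmemnet : ∀ x : X, ∃ c ∈ t, x ∈ ball c (δ / 2) := by
    intro x
    have := htsub (Set.mem_univ x)
    simpa using this
  choose g hg hgball using hmemnet
  apply Set.Finite.of_finite_image (f := g)
  · exact htf.subset (by rintro _ ⟨x, _, rfl⟩; exact hg x)
  · intro x hx y hy hgxy
    by_contra hxy
    have hd : dist x y < δ := by
      have h1 := hgball x
      have h2 := hgball y
      rw [mem_ball] at h1 h2
      calc dist x y ≤ dist x (g x) + dist (g y) y := by
            rw [hgxy]; exact dist_triangle x (g y) y
        _ < δ / 2 + δ / 2 := by rw [dist_comm (g y) y]; exact add_lt_add h1 h2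
        _ = δ := by ring
    exact absurd hd (not_lt.mpr (hsep x hx y hy hxy))

private lemma f_surjective (hf : Continuous f) (hopen : IsOpenMap f)
    (htrans : ∀ U V : Set X, IsOpen U → IsOpen V → U.Nonempty → V.Nonempty →
      ∃ n : ℕ, (f^[n] '' U ∩ V).Nonempty) [Nonempty X] :
    Function.Surjective f := by
  by_contra hsurj
  rw [← Set.range_eq_univ] at hsurj
  have hV : (Set.range f)ᶜ.Nonempty := by
    rw [Set.nonempty_compl]; exact hsurj
  have hVopen : IsOpen (Set.range f)ᶜ := (isCompact_range hf).isClosed.isOpen_compl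
  have hUopen : IsOpen (Set.range f) := hopen.isOpen_range
  have hUne : (Set.range f).Nonempty := Set.range_nonempty f
  obtain ⟨n, z, hz⟩ := htrans _ _ hUopen hVopen hUne hV
  obtain ⟨⟨u, hu, rfl⟩, hz2⟩ := hz
  obtain ⟨w, rfl⟩ := hu
  apply hz2
  rw [← Function.iterate_succ_apply, Function.iterate_succ_apply']
  exact ⟨_, rfl⟩


private noncomputable def TS (hfin : ∀ (n : ℕ) (x₀ : X), (f^[n] ⁻¹' {x₀}).Finite)
    (n : ℕ) (x₀ : X) : ℝ :=
  ∑ x ∈ (hfin n x₀).toFinset, Real.exp (birkhoffSum' f φ n x)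

private lemma treeSum_eq_TS (hfin : ∀ (n : ℕ) (x₀ : X), (f^[n] ⁻¹' {x₀}).Finite)
    (n : ℕ) (x₀ : X) : treeSum f φ n x₀ = TS f φ hfin n x₀ := by
  classical
  haveI := (hfin n x₀).fintype
  rw [treeSum, TS, tsum_fintype, ← Finset.sum_coe_sort ((hfin n x₀).toFinset)]
  exact Fintype.sum_equiv (Equiv.setCongr (hfin n x₀).coe_toFinset.symm) _ _ (fun x => rfl)

private lemma birkhoff_decomp (m n : ℕ) (x : X) :
    birkhoffSum' f φ (m + n) x = birkhoffSum' f φ m x + birkhoffSum' f φ n (f^[m] x) := by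
  simp only [birkhoffSum']
  rw [Finset.sum_range_add]
  congr 1
  refine Finset.sum_congr rfl fun j _ => ?_
  rw [add_comm m j, Function.iterate_add_apply]

private lemma TS_decomp (hfin : ∀ (n : ℕ) (x₀ : X), (f^[n] ⁻¹' {x₀}).Finite)
    (m n : ℕ) (x₀ : X) :
    TS f φ hfin (m + n) x₀ =
      ∑ w ∈ (hfin n x₀).toFinset, Real.exp (birkhoffSum' f φ n w) * TS f φ hfin m w := by
  classical
  have hbi : (hfin (m + n) x₀).toFinset =
      (hfin n x₀).toFinset.biUnion (fun w => (hfin m w).toFinset) := by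
    ext x
    simp only [Set.Finite.mem_toFinset, Set.mem_preimage, Set.mem_singleton_iff,
      Finset.mem_biUnion]
    constructor
    · intro h
      refine ⟨f^[m] x, ?_, rfl⟩
      rw [← Function.iterate_add_apply, add_comm n m, h]
    · rintro ⟨w, hw, rfl⟩
      rw [← Function.iterate_add_apply, add_comm n m] at hw
      exact hw
  have hdisj : (↑(hfin n x₀).toFinset : Set X).PairwiseDisjoint
      (fun w => (hfin m w).toFinset) := by
    intro w _ w' _ hww'
    simp only [Function.onFun]
    rw [Finset.disjoint_left]
    intro x hx hx'
    simp only [Set.Finite.mem_toFinset, Set.mem_preimage, Set.mem_singleton_iff] at hx hx'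
    exact hww' (hx ▸ hx' ▸ rfl)
  rw [TS, hbi, Finset.sum_biUnion hdisj]
  refine Finset.sum_congr rfl fun w hw => ?_
  rw [TS, Finset.mul_sum]
  refine Finset.sum_congr rfl fun x hx => ?_
  simp only [Set.Finite.mem_toFinset, Set.mem_preimage, Set.mem_singleton_iff] at hx
  rw [birkhoff_decomp f φ m n x, hx, Real.exp_add, mul_comm]

private lemma birkhoff_abs_le {K : ℝ} (hK : ∀ x : X, |φ x| ≤ K) (n : ℕ) (x : X) :
    |birkhoffSum' f φ n x| ≤ n * K := by
  calc |birkhoffSum' f φ n x| ≤ ∑ j ∈ Finset.range n, |φ (f^[j] x)| :=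
        Finset.abs_sum_le_sum_abs _ _
    _ ≤ ∑ _j ∈ Finset.range n, K := Finset.sum_le_sum fun j _ => hK _
    _ = n * K := by simp [mul_comm]

private lemma fiber_nonempty (hsurj : Function.Surjective f) (n : ℕ) (x₀ : X) :
    (f^[n] ⁻¹' {x₀}).Nonempty := by
  obtain ⟨x, hx⟩ := (hsurj.iterate n) x₀
  exact ⟨x, by simp [hx]⟩

private lemma TS_pos (hfin : ∀ (n : ℕ) (x₀ : X), (f^[n] ⁻¹' {x₀}).Finite)
    (hsurj : Function.Surjective f) (n : ℕ) (x₀ : X) : 0 < TS f φ hfin n x₀ := by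
  obtain ⟨x, hx⟩ := fiber_nonempty f hsurj n x₀
  refine Finset.sum_pos' (fun i _ => (Real.exp_pos _).le) ?_
  exact ⟨x, by simpa [Set.Finite.mem_toFinset] using hx, Real.exp_pos _⟩

private lemma TS_ge (hfin : ∀ (n : ℕ) (x₀ : X), (f^[n] ⁻¹' {x₀}).Finite)
    (hsurj : Function.Surjective f) {K : ℝ} (hK : ∀ x : X, |φ x| ≤ K) (n : ℕ) (x₀ : X) :
    Real.exp (-(n * K)) ≤ TS f φ hfin n x₀ := by
  obtain ⟨x, hx⟩ := fiber_nonempty f hsurj n x₀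
  have hx' : x ∈ (hfin n x₀).toFinset := by simpa [Set.Finite.mem_toFinset] using hx
  calc Real.exp (-(n * K)) ≤ Real.exp (birkhoffSum' f φ n x) := by
        apply Real.exp_le_exp.mpr
        have := (abs_le.mp (birkhoff_abs_le f φ hK n x)).1
        linarith
    _ ≤ TS f φ hfin n x₀ :=
        Finset.single_le_sum (fun i _ => (Real.exp_pos _).le) hx'

private lemma TS_le_card (hfin : ∀ (n : ℕ) (x₀ : X), (f^[n] ⁻¹' {x₀}).Finite)
    {K : ℝ} (hK : ∀ x : X, |φ x| ≤ K) (n : ℕ) (x₀ : X) :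
    TS f φ hfin n x₀ ≤ ((hfin n x₀).toFinset.card : ℝ) * Real.exp (n * K) := by
  calc TS f φ hfin n x₀ ≤ ∑ _x ∈ (hfin n x₀).toFinset, Real.exp (n * K) :=
        Finset.sum_le_sum fun x _ => Real.exp_le_exp.mpr
          (abs_le.mp (birkhoff_abs_le f φ hK n x)).2
    _ = _ := by rw [Finset.sum_const, nsmul_eq_mul]


private lemma core_open (hf : Continuous f) (hopen : IsOpenMap f) (hη : 0 < η) :
    ∃ ε > 0, ∀ z : X, ball (f z) ε ⊆ f '' ball z (η / 2) := by
  have hr : (0 : ℝ) < η / 4 := by linarith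
  have hball : ∀ z : X, ∃ e > 0, ball (f z) e ⊆ f '' ball z (η / 4) := by
    intro z
    have hopen' : IsOpen (f '' ball z (η / 4)) := hopen _ isOpen_ball
    have hmem : f z ∈ f '' ball z (η / 4) := ⟨z, mem_ball_self hr, rfl⟩
    exact Metric.isOpen_iff.mp hopen' _ hmem
  choose e he hesub using hball
  have hcont : ∀ z : X, ∃ ρ > 0, ρ ≤ η / 4 ∧
      ∀ z' : X, dist z' z < ρ → dist (f z') (f z) < e z / 2 := by
    intro z
    obtain ⟨δ, hδ, hδc⟩ := Metric.continuous_iff.mp hf z (e z / 2) (by linarith [he z])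
    exact ⟨min δ (η / 4), lt_min hδ hr, min_le_right _ _,
      fun z' hz' => hδc z' (hz'.trans_le (min_le_left _ _))⟩
  choose ρ hρ hρle hρc using hcont
  obtain ⟨t, ht⟩ := (isCompact_univ (X := X)).elim_finite_subcover
    (fun z : X => ball z (ρ z)) (fun z => isOpen_ball)
    (fun x _ => Set.mem_iUnion.mpr ⟨x, mem_ball_self (hρ x)⟩)
  have htne : t.Nonempty := by
    by_contra hne
    rw [Finset.not_nonempty_iff_eq_empty] at hne
    have := ht (Set.mem_univ (Classical.arbitrary X))
    simp [hne] at this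
  refine ⟨t.inf' htne (fun i => e i / 2), ?_, ?_⟩
  · rw [gt_iff_lt, Finset.lt_inf'_iff]
    intro i _
    linarith [he i]
  · intro z w hw
    have hz := ht (Set.mem_univ z)
    simp only [Set.mem_iUnion] at hz
    obtain ⟨i, hi, hzi⟩ := hz
    rw [mem_ball] at hw hzi
    have h1 : dist (f z) (f i) < e i / 2 := hρc i z hzi
    have h2 : dist w (f i) < e i := by
      have h3 : t.inf' htne (fun i => e i / 2) ≤ e i / 2 := Finset.inf'_le _ hi
      calc dist w (f i) ≤ dist w (f z) + dist (f z) (f i) := dist_triangle _ _ _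
        _ < e i / 2 + e i / 2 := add_lt_add (hw.trans_le h3) h1
        _ = e i := by ring
    obtain ⟨v, hv, hvw⟩ := hesub i (mem_ball.mpr h2)
    refine ⟨v, ?_, hvw⟩
    rw [mem_ball] at hv ⊢
    calc dist v z ≤ dist v i + dist i z := dist_triangle _ _ _
      _ < η / 4 + η / 4 := add_lt_add hv (by rw [dist_comm]; exact hzi.trans_le (hρle i))
      _ = η / 2 := by ring

private lemma lift_one (hf : Continuous f) (hopen : IsOpenMap f) (hlam : 1 < lam) (hη : 0 < η)
    (hexp : ∀ x y : X, dist x y ≤ η → lam * dist x y ≤ dist (f x) (f y)) :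
    ∃ ε > 0, ε ≤ η / 2 ∧ ∀ z w : X, dist (f z) w < ε →
      ∃ v, f v = w ∧ dist v z ≤ dist (f z) w / lam := by
  obtain ⟨ε₀, hε₀, hsub⟩ := core_open f hf hopen hη
  refine ⟨min ε₀ (η / 2), lt_min hε₀ (by linarith), min_le_right _ _, fun z w hw => ?_⟩
  have hw' : w ∈ ball (f z) ε₀ := mem_ball'.mpr (hw.trans_le (min_le_left _ _))
  obtain ⟨v, hv, rfl⟩ := hsub z hw'
  rw [mem_ball] at hv
  refine ⟨v, rfl, ?_⟩
  have hexp' := hexp v z (by linarith)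
  rw [le_div_iff₀ (by linarith : (0:ℝ) < lam), mul_comm, dist_comm (f z) (f v)]
  exact hexp'

private lemma pair_lift (hlam : 1 < lam) {ε : ℝ}
    (hlift : ∀ z w : X, dist (f z) w < ε → ∃ v, f v = w ∧ dist v z ≤ dist (f z) w / lam) :
    ∀ (n : ℕ) (x y₀ : X), dist (f^[n] x) y₀ < ε →
      ∃ y, f^[n] y = y₀ ∧ ∀ j ≤ n, dist (f^[j] x) (f^[j] y) ≤ dist (f^[n] x) y₀ / lam ^ (n - j) := by
  intro n
  induction n with
  | zero =>
    intro x y₀ h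
    refine ⟨y₀, rfl, fun j hj => ?_⟩
    interval_cases j
    rw [Function.iterate_zero_apply, Function.iterate_zero_apply, Nat.sub_zero, pow_zero,
      div_one]
  | succ n ih =>
    intro x y₀ h
    have hiter : f^[n] (f x) = f^[n + 1] x := (Function.iterate_succ_apply f n x).symm
    have h' : dist (f^[n] (f x)) y₀ < ε := by rw [hiter]; exact h
    obtain ⟨y', hy', hjy'⟩ := ih (f x) y₀ h'
    have hlampow : (1 : ℝ) ≤ lam ^ n := one_le_pow₀ hlam.le
    have h0 : dist (f x) y' ≤ dist (f^[n + 1] x) y₀ / lam ^ n := by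
      have := hjy' 0 (Nat.zero_le n)
      rw [Function.iterate_zero_apply, Function.iterate_zero_apply, Nat.sub_zero, hiter] at this
      exact this
    have hfxy' : dist (f x) y' < ε :=
      lt_of_le_of_lt (h0.trans (div_le_self dist_nonneg hlampow)) h
    obtain ⟨v, hv, hvd⟩ := hlift x y' hfxy'
    refine ⟨v, by rw [Function.iterate_succ_apply, hv, hy'], fun j hj => ?_⟩
    match j with
    | 0 =>
      simp only [Function.iterate_zero_apply, Nat.sub_zero]
      calc dist x v = dist v x := dist_comm _ _
        _ ≤ dist (f x) y' / lam := hvd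
        _ ≤ dist (f^[n + 1] x) y₀ / lam ^ n / lam := by
            apply div_le_div_of_nonneg_right h0 (by linarith)
        _ = dist (f^[n + 1] x) y₀ / lam ^ (n + 1) := by rw [div_div, ← pow_succ]
    | j + 1 =>
      have hj' : j ≤ n := by omega
      have := hjy' j hj'
      rw [Function.iterate_succ_apply f j x, Function.iterate_succ_apply f j v, hv]
      rw [hiter] at this
      calc dist (f^[j] (f x)) (f^[j] y') ≤ dist (f^[n + 1] x) y₀ / lam ^ (n - j) := this
        _ = dist (f^[n + 1] x) y₀ / lam ^ (n + 1 - (j + 1)) := by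
            rw [Nat.succ_sub_succ]

private lemma rpow_pow_comm {a : ℝ} (ha : 0 ≤ a) (b : ℝ) (m : ℕ) :
    (a ^ m) ^ b = (a ^ b) ^ m := by
  rw [← Real.rpow_natCast a m, ← Real.rpow_mul ha, mul_comm, Real.rpow_mul ha,
    Real.rpow_natCast]

private lemma birkhoff_diff {C b : ℝ} (hC : 0 ≤ C) (hb0 : 0 < b)
    (hHold : ∀ x y : X, |φ x - φ y| ≤ C * dist x y ^ b) (hlam : 1 < lam) {d₀ : ℝ} (hd₀ : 0 ≤ d₀)
    (n : ℕ) (x y : X)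
    (hd : ∀ j ≤ n, dist (f^[j] x) (f^[j] y) ≤ d₀ / lam ^ (n - j)) :
    |birkhoffSum' f φ n x - birkhoffSum' f φ n y|
      ≤ C * d₀ ^ b * (lam⁻¹ ^ b * (1 - lam⁻¹ ^ b)⁻¹) := by
  have hlam0 : (0:ℝ) < lam := lt_trans one_pos hlam
  have hinv0 : (0:ℝ) < lam⁻¹ := inv_pos.mpr hlam0
  have hinv1 : lam⁻¹ < 1 := inv_lt_one_of_one_lt₀ hlam
  set q : ℝ := lam⁻¹ ^ b with hqdef
  have hq0 : 0 < q := Real.rpow_pos_of_pos hinv0 b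
  have hq1 : q < 1 := Real.rpow_lt_one hinv0.le hinv1 hb0
  have hterm : ∀ j < n, |φ (f^[j] x) - φ (f^[j] y)| ≤ C * d₀ ^ b * q ^ (n - j) := by
    intro j hj
    have h2 : dist (f^[j] x) (f^[j] y) ^ b ≤ (d₀ * lam⁻¹ ^ (n - j)) ^ b := by
      apply Real.rpow_le_rpow dist_nonneg _ hb0.le
      have := hd j hj.le
      rwa [div_eq_mul_inv, ← inv_pow] at this
    rw [Real.mul_rpow hd₀ (pow_nonneg hinv0.le _), rpow_pow_comm hinv0.le b (n - j)] at h2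
    calc |φ (f^[j] x) - φ (f^[j] y)| ≤ C * dist (f^[j] x) (f^[j] y) ^ b := hHold _ _
      _ ≤ C * (d₀ ^ b * q ^ (n - j)) := by
          apply mul_le_mul_of_nonneg_left _ hC
          exact h2
      _ = C * d₀ ^ b * q ^ (n - j) := by ring
  have hgeom : ∑ j ∈ Finset.range n, q ^ (n - j) ≤ q * (1 - q)⁻¹ := by
    have h1 : ∑ j ∈ Finset.range n, q ^ (n - j) = ∑ j ∈ Finset.range n, q ^ (j + 1) := by
      rw [← Finset.sum_range_reflect (fun j => q ^ (j + 1)) n]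
      refine Finset.sum_congr rfl fun j hj => ?_
      rw [Finset.mem_range] at hj
      congr 1
      omega
    have h2 : ∑ j ∈ Finset.range n, q ^ (j + 1) = q * ∑ j ∈ Finset.range n, q ^ j := by
      rw [Finset.mul_sum]
      exact Finset.sum_congr rfl fun j _ => by rw [pow_succ, mul_comm]
    have h3 : ∑ j ∈ Finset.range n, q ^ j ≤ (1 - q)⁻¹ := by
      have h4 := Summable.sum_le_tsum (Finset.range n) (fun i _ => pow_nonneg hq0.le i)
        (summable_geometric_of_lt_one hq0.le hq1)
      rwa [tsum_geometric_of_lt_one hq0.le hq1] at h4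
    rw [h1, h2]
    exact mul_le_mul_of_nonneg_left h3 hq0.le
  have hcd : 0 ≤ C * d₀ ^ b := mul_nonneg hC (Real.rpow_nonneg hd₀ b)
  calc |birkhoffSum' f φ n x - birkhoffSum' f φ n y|
      = |∑ j ∈ Finset.range n, (φ (f^[j] x) - φ (f^[j] y))| := by
        rw [birkhoffSum', birkhoffSum', Finset.sum_sub_distrib]
    _ ≤ ∑ j ∈ Finset.range n, |φ (f^[j] x) - φ (f^[j] y)| := Finset.abs_sum_le_sum_abs _ _
    _ ≤ ∑ j ∈ Finset.range n, C * d₀ ^ b * q ^ (n - j) :=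
        Finset.sum_le_sum fun j hj => hterm j (Finset.mem_range.mp hj)
    _ = C * d₀ ^ b * ∑ j ∈ Finset.range n, q ^ (n - j) := by rw [Finset.mul_sum]
    _ ≤ C * d₀ ^ b * (q * (1 - q)⁻¹) := mul_le_mul_of_nonneg_left hgeom hcd

private lemma osc (hfin : ∀ (n : ℕ) (x₀ : X), (f^[n] ⁻¹' {x₀}).Finite)
    (hlam : 1 < lam) (hη : 0 < η)
    (hexp : ∀ x y : X, dist x y ≤ η → lam * dist x y ≤ dist (f x) (f y))
    {C b : ℝ} (hC : 0 ≤ C) (hb0 : 0 < b)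
    (hHold : ∀ x y : X, |φ x - φ y| ≤ C * dist x y ^ b)
    {ε : ℝ} (hε : 0 < ε) (hεη : ε ≤ η / 2)
    (hlift : ∀ z w : X, dist (f z) w < ε → ∃ v, f v = w ∧ dist v z ≤ dist (f z) w / lam)
    (n : ℕ) (x₀ y₀ : X) (hxy : dist x₀ y₀ < ε) :
    TS f φ hfin n x₀ ≤
      Real.exp (C * ε ^ b * (lam⁻¹ ^ b * (1 - lam⁻¹ ^ b)⁻¹)) * TS f φ hfin n y₀ := by
  classical
  set D : ℝ := C * ε ^ b * (lam⁻¹ ^ b * (1 - lam⁻¹ ^ b)⁻¹) with hDdef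
  set F := (hfin n x₀).toFinset with hF
  set G := (hfin n y₀).toFinset with hG
  have key : ∀ x : X, ∃ y : X, x ∈ F →
      f^[n] y = y₀ ∧ ∀ j ≤ n, dist (f^[j] x) (f^[j] y) ≤ dist x₀ y₀ / lam ^ (n - j) := by
    intro x
    by_cases hx : x ∈ F
    · have hfx : f^[n] x = x₀ := by
        have := hx
        rw [hF, Set.Finite.mem_toFinset] at this
        exact this
      have hdd : dist (f^[n] x) y₀ < ε := by rw [hfx]; exact hxy
      obtain ⟨y, h1, h2⟩ := pair_lift f hlam hlift n x y₀ hdd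
      exact ⟨y, fun _ => ⟨h1, by rwa [hfx] at h2⟩⟩
    · exact ⟨x₀, fun h => absurd h hx⟩
  choose Φ hΦ using key
  have hEnn : 0 ≤ lam⁻¹ ^ b * (1 - lam⁻¹ ^ b)⁻¹ := by
    have hlam0 : (0:ℝ) < lam := lt_trans one_pos hlam
    have hinv0 : (0:ℝ) < lam⁻¹ := inv_pos.mpr hlam0
    have hq0 : (0:ℝ) < lam⁻¹ ^ b := Real.rpow_pos_of_pos hinv0 b
    have hq1 : lam⁻¹ ^ b < 1 :=
      Real.rpow_lt_one hinv0.le (inv_lt_one_of_one_lt₀ hlam) hb0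
    exact mul_nonneg hq0.le (inv_nonneg.mpr (by linarith))
  have hSdiff : ∀ x ∈ F, Real.exp (birkhoffSum' f φ n x) ≤
      Real.exp D * Real.exp (birkhoffSum' f φ n (Φ x)) := by
    intro x hx
    obtain ⟨h1, h2⟩ := hΦ x hx
    have hd := birkhoff_diff f φ hC hb0 hHold hlam dist_nonneg n x (Φ x) h2
    have hmono : C * dist x₀ y₀ ^ b * (lam⁻¹ ^ b * (1 - lam⁻¹ ^ b)⁻¹) ≤ D := by
      rw [hDdef]
      have h := Real.rpow_le_rpow dist_nonneg hxy.le hb0.le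
      exact mul_le_mul_of_nonneg_right (mul_le_mul_of_nonneg_left h hC) hEnn
    have habs : birkhoffSum' f φ n x ≤ birkhoffSum' f φ n (Φ x) + D := by
      have := (abs_le.mp hd).2
      linarith
    rw [← Real.exp_add]
    apply Real.exp_le_exp.mpr
    linarith
  have hinj : Set.InjOn Φ ↑F := by
    intro x hx x' hx' hEq
    by_contra hne
    have hfx : f^[n] x = x₀ := by
      have := hx; rw [hF] at this; simp only [Finset.mem_coe, Set.Finite.mem_toFinset] at this
      exact this
    have hfx' : f^[n] x' = x₀ := by
      have := hx'; rw [hF] at this; simp only [Finset.mem_coe, Set.Finite.mem_toFinset] at this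
      exact this
    obtain ⟨k, hk, hdk⟩ := sep_lemma f hlam hexp n x x' (by rw [hfx, hfx']) hne
    have hxF : x ∈ F := by rw [hF, Set.Finite.mem_toFinset]; exact hfx
    have hx'F : x' ∈ F := by rw [hF, Set.Finite.mem_toFinset]; exact hfx'
    have b1 := (hΦ x hxF).2 k hk.le
    have b2 := (hΦ x' hx'F).2 k hk.le
    rw [hEq] at b1
    have hdiv : dist x₀ y₀ / lam ^ (n - k) ≤ dist x₀ y₀ :=
      div_le_self dist_nonneg (one_le_pow₀ hlam.le)
    have : dist (f^[k] x) (f^[k] x') ≤ η := by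
      calc dist (f^[k] x) (f^[k] x')
          ≤ dist (f^[k] x) (f^[k] (Φ x')) + dist (f^[k] (Φ x')) (f^[k] x') := dist_triangle _ _ _
        _ ≤ dist x₀ y₀ / lam ^ (n - k) + dist x₀ y₀ / lam ^ (n - k) := by
            rw [dist_comm (f^[k] (Φ x')) (f^[k] x')]
            exact add_le_add b1 b2
        _ ≤ dist x₀ y₀ + dist x₀ y₀ := add_le_add hdiv hdiv
        _ ≤ ε + ε := add_le_add hxy.le hxy.le
        _ ≤ η := by linarith
    linarith
  have himg : F.image Φ ⊆ G := by
    intro y hy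
    rw [Finset.mem_image] at hy
    obtain ⟨x, hx, rfl⟩ := hy
    rw [hG, Set.Finite.mem_toFinset]
    exact (hΦ x hx).1
  calc TS f φ hfin n x₀ = ∑ x ∈ F, Real.exp (birkhoffSum' f φ n x) := rfl
    _ ≤ ∑ x ∈ F, Real.exp D * Real.exp (birkhoffSum' f φ n (Φ x)) :=
        Finset.sum_le_sum hSdiff
    _ = Real.exp D * ∑ x ∈ F, Real.exp (birkhoffSum' f φ n (Φ x)) := by rw [Finset.mul_sum]
    _ ≤ Real.exp D * TS f φ hfin n y₀ := by
        apply mul_le_mul_of_nonneg_left _ (Real.exp_pos D).le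
        have himage : ∑ y ∈ F.image Φ, Real.exp (birkhoffSum' f φ n y)
            = ∑ x ∈ F, Real.exp (birkhoffSum' f φ n (Φ x)) :=
          Finset.sum_image (fun x hx x' hx' h => hinj hx hx' h)
        rw [← himage]
        exact Finset.sum_le_sum_of_subset_of_nonneg himg
          (fun i _ _ => (Real.exp_pos _).le)

private lemma card_bound (hlam : 1 < lam) (hη : 0 < η)
    (hexp : ∀ x y : X, dist x y ≤ η → lam * dist x y ≤ dist (f x) (f y))
    (hfin : ∀ (n : ℕ) (x₀ : X), (f^[n] ⁻¹' {x₀}).Finite) :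
    ∃ M : ℕ, 0 < M ∧ ∀ (n : ℕ) (x₀ : X), (hfin n x₀).toFinset.card ≤ M ^ (n + 1) := by
  classical
  obtain ⟨t, htf, htsub⟩ := totallyBounded_iff.mp
    ((isCompact_univ (X := X)).totallyBounded) (η / 2) (by linarith)
  have hmem : ∀ x : X, ∃ c, c ∈ htf.toFinset ∧ dist x c < η / 2 := by
    intro x
    have := htsub (Set.mem_univ x)
    simp only [Set.mem_iUnion, mem_ball] at this
    obtain ⟨c, hc, hd⟩ := this
    exact ⟨c, htf.mem_toFinset.mpr hc, hd⟩
  choose g hg1 hg2 using hmem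
  refine ⟨htf.toFinset.card, ?_, ?_⟩
  · rw [Finset.card_pos]
    exact ⟨g (Classical.arbitrary X), hg1 _⟩
  · intro n x₀
    have hinj : Set.InjOn
        (fun w => (fun j : Fin (n + 1) => (⟨g (f^[(j : ℕ)] w), hg1 _⟩ : {c // c ∈ htf.toFinset})))
        ↑(hfin n x₀).toFinset := by
      intro w hw w' hw' hEq
      by_contra hne
      have hfw : f^[n] w = x₀ := by
        have := hw; simp only [Finset.mem_coe, Set.Finite.mem_toFinset] at this; exact this
      have hfw' : f^[n] w' = x₀ := by
        have := hw'; simp only [Finset.mem_coe, Set.Finite.mem_toFinset] at this; exact this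
      obtain ⟨k, hk, hdk⟩ := sep_lemma f hlam hexp n w w' (by rw [hfw, hfw']) hne
      have hjk := congrFun hEq (⟨k, by omega⟩ : Fin (n + 1))
      have hgg : g (f^[k] w) = g (f^[k] w') := by
        simpa using congrArg Subtype.val hjk
      have : dist (f^[k] w) (f^[k] w') < η := by
        calc dist (f^[k] w) (f^[k] w')
            ≤ dist (f^[k] w) (g (f^[k] w)) + dist (g (f^[k] w')) (f^[k] w') := by
              rw [hgg]; exact dist_triangle _ _ _
          _ < η / 2 + η / 2 := by
              rw [dist_comm (g (f^[k] w')) (f^[k] w')]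
              exact add_lt_add (hg2 _) (hg2 _)
          _ = η := by ring
      linarith
    have hcard := Finset.card_le_card_of_injOn _ (fun a _ => Finset.mem_univ _) hinj
    rwa [Finset.card_univ, Fintype.card_fun, Fintype.card_coe, Fintype.card_fin] at hcard

private lemma connect (htrans : TopologicallyTransitive f) (hlam : 1 < lam) {ε : ℝ} (hε : 0 < ε)
    (hlift : ∀ z w : X, dist (f z) w < ε → ∃ v, f v = w ∧ dist v z ≤ dist (f z) w / lam) :
    ∃ N : ℕ, ∀ p q : X, ∃ m ≤ N, ∃ v, f^[m] v = q ∧ dist v p < ε := by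
  classical
  obtain ⟨t, htf, htsub⟩ := totallyBounded_iff.mp
    ((isCompact_univ (X := X)).totallyBounded) (ε / 4) (by linarith)
  have hmem : ∀ x : X, ∃ c, c ∈ htf.toFinset ∧ dist x c < ε / 4 := by
    intro x
    have := htsub (Set.mem_univ x)
    simp only [Set.mem_iUnion, mem_ball] at this
    obtain ⟨c, hc, hd⟩ := this
    exact ⟨c, htf.mem_toFinset.mpr hc, hd⟩
  have hpair : ∀ c c' : X, ∃ m : ℕ, ∃ u : X,
      c ∈ htf.toFinset → c' ∈ htf.toFinset →
      dist u c < ε / 4 ∧ dist (f^[m] u) c' < ε / 4 := by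
    intro c c'
    by_cases h : c ∈ htf.toFinset ∧ c' ∈ htf.toFinset
    · obtain ⟨m, z, hz⟩ := htrans (ball c (ε / 4)) (ball c' (ε / 4)) isOpen_ball isOpen_ball
        ⟨c, mem_ball_self (by linarith)⟩ ⟨c', mem_ball_self (by linarith)⟩
      obtain ⟨⟨u, hu, rfl⟩, hz2⟩ := hz
      exact ⟨m, u, fun _ _ => ⟨mem_ball.mp hu, mem_ball.mp hz2⟩⟩
    · exact ⟨0, c, fun h1 h2 => absurd ⟨h1, h2⟩ h⟩
  choose mfun ufun hmu using hpair
  refine ⟨htf.toFinset.sup (fun c => htf.toFinset.sup (fun c' => mfun c c')), fun p q => ?_⟩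
  obtain ⟨c, hc, hpc⟩ := hmem p
  obtain ⟨c', hc', hqc'⟩ := hmem q
  obtain ⟨hu1, hu2⟩ := hmu c c' hc hc'
  have hdist : dist (f^[mfun c c'] (ufun c c')) q < ε / 2 := by
    calc dist (f^[mfun c c'] (ufun c c')) q
        ≤ dist (f^[mfun c c'] (ufun c c')) c' + dist c' q := dist_triangle _ _ _
      _ < ε / 4 + ε / 4 := add_lt_add hu2 (by rw [dist_comm]; exact hqc')
      _ = ε / 2 := by ring
  obtain ⟨v, hv1, hv2⟩ := pair_lift f hlam hlift (mfun c c') (ufun c c') q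
    (hdist.trans (by linarith))
  refine ⟨mfun c c', ?_, v, hv1, ?_⟩
  · exact le_trans (Finset.le_sup (f := fun c' => mfun c c') hc')
      (Finset.le_sup (f := fun c => htf.toFinset.sup fun c' => mfun c c') hc)
  · have h0 := hv2 0 (Nat.zero_le _)
    rw [Function.iterate_zero_apply, Function.iterate_zero_apply, Nat.sub_zero] at h0
    have h0' : dist (ufun c c') v ≤ dist (f^[mfun c c'] (ufun c c')) q :=
      h0.trans (div_le_self dist_nonneg (one_le_pow₀ hlam.le))
    calc dist v p ≤ dist v (ufun c c') + dist (ufun c c') c + dist c p :=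
          dist_triangle4 _ _ _ _
      _ < ε / 2 + ε / 4 + ε / 4 := by
          refine add_lt_add (add_lt_add_of_le_of_lt ?_ hu1) (by rw [dist_comm]; exact hpc)
          rw [dist_comm]
          exact h0'.trans_lt hdist |>.le
      _ = ε := by ring

private lemma key_one (hfin : ∀ (n : ℕ) (x₀ : X), (f^[n] ⁻¹' {x₀}).Finite)
    (hsurj : Function.Surjective f)
    (hlam : 1 < lam) (hη : 0 < η)
    (hexp : ∀ x y : X, dist x y ≤ η → lam * dist x y ≤ dist (f x) (f y))
    {C b : ℝ} (hC : 0 ≤ C) (hb0 : 0 < b)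
    (hHold : ∀ x y : X, |φ x - φ y| ≤ C * dist x y ^ b)
    {ε : ℝ} (hε : 0 < ε) (hεη : ε ≤ η / 2)
    (hlift : ∀ z w : X, dist (f z) w < ε → ∃ v, f v = w ∧ dist v z ≤ dist (f z) w / lam)
    {K : ℝ} (hK : ∀ x : X, |φ x| ≤ K) (hK0 : 0 ≤ K)
    {N : ℕ} (hconn : ∀ p q : X, ∃ m ≤ N, ∃ v, f^[m] v = q ∧ dist v p < ε) :
    ∀ p q : X, ∃ j ≤ N, ∀ n : ℕ,
      Real.exp (-(N * K) - C * ε ^ b * (lam⁻¹ ^ b * (1 - lam⁻¹ ^ b)⁻¹)) * TS f φ hfin n p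
        ≤ TS f φ hfin (n + j) q := by
  intro p q
  set D : ℝ := C * ε ^ b * (lam⁻¹ ^ b * (1 - lam⁻¹ ^ b)⁻¹) with hD
  obtain ⟨j, hjN, v, hv1, hv2⟩ := hconn p q
  refine ⟨j, hjN, fun n => ?_⟩
  have hvq : v ∈ (hfin j q).toFinset := by
    rw [Set.Finite.mem_toFinset]
    exact hv1
  have hterm : Real.exp (birkhoffSum' f φ j v) * TS f φ hfin n v ≤ TS f φ hfin (n + j) q := by
    rw [TS_decomp f φ hfin n j q]
    exact Finset.single_le_sum
      (fun w _ => mul_nonneg (Real.exp_pos _).le (TS_pos f φ hfin hsurj n w).le) hvq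
  have hosc : Real.exp (-D) * TS f φ hfin n p ≤ TS f φ hfin n v := by
    have h2 := osc f φ hfin hlam hη hexp hC hb0 hHold hε hεη hlift n p v
      (by rw [dist_comm]; exact hv2)
    calc Real.exp (-D) * TS f φ hfin n p
        ≤ Real.exp (-D) * (Real.exp D * TS f φ hfin n v) :=
          mul_le_mul_of_nonneg_left h2 (Real.exp_pos _).le
      _ = TS f φ hfin n v := by
          rw [← mul_assoc, ← Real.exp_add, neg_add_cancel, Real.exp_zero, one_mul]
  have hSj : Real.exp (-(N * K)) ≤ Real.exp (birkhoffSum' f φ j v) := by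
    apply Real.exp_le_exp.mpr
    have h1 := (abs_le.mp (birkhoff_abs_le f φ hK j v)).1
    have h2 : (j : ℝ) * K ≤ N * K := by
      apply mul_le_mul_of_nonneg_right _ hK0
      exact_mod_cast hjN
    linarith
  calc Real.exp (-(N * K) - D) * TS f φ hfin n p
      = Real.exp (-(N * K)) * (Real.exp (-D) * TS f φ hfin n p) := by
        rw [← mul_assoc, ← Real.exp_add]; ring_nf
    _ ≤ Real.exp (-(N * K)) * TS f φ hfin n v :=
        mul_le_mul_of_nonneg_left hosc (Real.exp_pos _).le
    _ ≤ Real.exp (birkhoffSum' f φ j v) * TS f φ hfin n v :=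
        mul_le_mul_of_nonneg_right hSj (TS_pos f φ hfin hsurj n v).le
    _ ≤ TS f φ hfin (n + j) q := hterm

private lemma block_ineq (hfin : ∀ (n : ℕ) (x₀ : X), (f^[n] ⁻¹' {x₀}).Finite)
    (hsurj : Function.Surjective f)
    {K : ℝ} (hK : ∀ x : X, |φ x| ≤ K) {N : ℕ} {ρ : ℝ} (hρ : 0 < ρ)
    (hkey : ∀ p q : X, ∃ j ≤ N, ∀ n : ℕ, ρ * TS f φ hfin n p ≤ TS f φ hfin (n + j) q) :
    ∀ (x₀ : X) (m : ℕ), ∃ j ≤ N, ∀ n : ℕ,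
      ρ / (N + 1) * (TS f φ hfin m x₀ * TS f φ hfin n x₀) ≤ TS f φ hfin (n + (m + j)) x₀ := by
  classical
  intro x₀ m
  choose jf hjfN hjfkey using hkey
  set F := (hfin m x₀).toFinset with hF
  have hpart : ∃ j ≤ N, TS f φ hfin m x₀ / (N + 1) ≤
      ∑ w ∈ F.filter (fun w => jf x₀ w = j), Real.exp (birkhoffSum' f φ m w) := by
    by_contra hcon
    push_neg at hcon
    have hmap : ∀ w ∈ F, jf x₀ w ∈ Finset.range (N + 1) := by
      intro w _
      rw [Finset.mem_range]
      exact Nat.lt_succ_of_le (hjfN x₀ w)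
    have htot : ∑ j ∈ Finset.range (N + 1),
        ∑ w ∈ F.filter (fun w => jf x₀ w = j), Real.exp (birkhoffSum' f φ m w)
        = TS f φ hfin m x₀ := Finset.sum_fiberwise_of_maps_to hmap _
    have hlt : ∑ j ∈ Finset.range (N + 1),
        ∑ w ∈ F.filter (fun w => jf x₀ w = j), Real.exp (birkhoffSum' f φ m w)
        < ∑ _j ∈ Finset.range (N + 1), TS f φ hfin m x₀ / (N + 1) := by
      apply Finset.sum_lt_sum_of_nonempty ⟨0, Finset.mem_range.mpr (Nat.succ_pos N)⟩
      intro j hj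
      exact hcon j (Nat.lt_succ_iff.mp (Finset.mem_range.mp hj))
    rw [htot, Finset.sum_const, Finset.card_range, nsmul_eq_mul] at hlt
    have : ((N : ℝ) + 1) ≠ 0 := by positivity
    rw [show ((N + 1 : ℕ) : ℝ) = (N : ℝ) + 1 by push_cast; ring] at hlt
    rw [mul_div_cancel₀ _ this] at hlt
    exact lt_irrefl _ hlt
  obtain ⟨j, hjN, hsum⟩ := hpart
  refine ⟨j, hjN, fun n => ?_⟩
  have hdecomp : TS f φ hfin ((n + j) + m) x₀ =
      ∑ w ∈ F, Real.exp (birkhoffSum' f φ m w) * TS f φ hfin (n + j) w :=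
    TS_decomp f φ hfin (n + j) m x₀
  have hsub : ∑ w ∈ F.filter (fun w => jf x₀ w = j),
      Real.exp (birkhoffSum' f φ m w) * TS f φ hfin (n + j) w
      ≤ TS f φ hfin ((n + j) + m) x₀ := by
    rw [hdecomp]
    apply Finset.sum_le_sum_of_subset_of_nonneg (Finset.filter_subset _ _)
    intro w _ _
    exact mul_nonneg (Real.exp_pos _).le (TS_pos f φ hfin hsurj _ w).le
  have hlower : ∀ w ∈ F.filter (fun w => jf x₀ w = j),
      Real.exp (birkhoffSum' f φ m w) * (ρ * TS f φ hfin n x₀)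
        ≤ Real.exp (birkhoffSum' f φ m w) * TS f φ hfin (n + j) w := by
    intro w hw
    rw [Finset.mem_filter] at hw
    have := hjfkey x₀ w n
    rw [hw.2] at this
    exact mul_le_mul_of_nonneg_left this (Real.exp_pos _).le
  have hindex : n + (m + j) = (n + j) + m := by omega
  rw [hindex]
  calc ρ / (N + 1) * (TS f φ hfin m x₀ * TS f φ hfin n x₀)
      = (TS f φ hfin m x₀ / (N + 1)) * (ρ * TS f φ hfin n x₀) := by ring
    _ ≤ (∑ w ∈ F.filter (fun w => jf x₀ w = j), Real.exp (birkhoffSum' f φ m w))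
        * (ρ * TS f φ hfin n x₀) := by
        apply mul_le_mul_of_nonneg_right hsum
        exact mul_nonneg hρ.le (TS_pos f φ hfin hsurj n x₀).le
    _ = ∑ w ∈ F.filter (fun w => jf x₀ w = j),
        Real.exp (birkhoffSum' f φ m w) * (ρ * TS f φ hfin n x₀) := by
        rw [Finset.sum_mul]
    _ ≤ ∑ w ∈ F.filter (fun w => jf x₀ w = j),
        Real.exp (birkhoffSum' f φ m w) * TS f φ hfin (n + j) w :=
        Finset.sum_le_sum hlower
    _ ≤ TS f φ hfin ((n + j) + m) x₀ := hsub

private lemma iterate_ineq (g : ℕ → ℝ) (γ : ℝ) (hγ : 0 ≤ γ) (m' : ℕ)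
    (hstep : ∀ n, γ * g n ≤ g (n + m')) (hgpos : ∀ n, 0 ≤ g n) :
    ∀ t n, γ ^ t * g n ≤ g (n + t * m') := by
  intro t
  induction t with
  | zero => intro n; simp
  | succ t ih =>
    intro n
    calc γ ^ (t + 1) * g n = γ * (γ ^ t * g n) := by ring
      _ ≤ γ * g (n + t * m') := mul_le_mul_of_nonneg_left (ih n) hγ
      _ ≤ g (n + t * m' + m') := hstep _
      _ = g (n + (t + 1) * m') := by ring_nf

end Main

private lemma tendsto_of_block (T : ℕ → ℝ) (hTpos : ∀ n, 0 < T n)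
    {Kup : ℝ} (hup : ∀ n : ℕ, 1 ≤ n → Real.log (T n) / n ≤ Kup)
    {K : ℝ} (hK0 : 0 ≤ K) (hTlow : ∀ n : ℕ, Real.exp (-(n * K)) ≤ T n)
    {N : ℕ} {ρ : ℝ} (hρ : 0 < ρ)
    (hblock : ∀ m : ℕ, ∃ j ≤ N, ∀ n : ℕ, ρ * (T m * T n) ≤ T (n + (m + j))) :
    ∃ L : ℝ, Tendsto (fun n : ℕ => Real.log (T n) / n) atTop (𝓝 L) := by
  set s : ℕ → ℝ := fun n => Real.log (T n) / n with hs
  have hlogTlow : ∀ n : ℕ, -(n * K) ≤ Real.log (T n) := by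
    intro n
    have := Real.log_le_log (Real.exp_pos _) (hTlow n)
    rwa [Real.log_exp] at this
  have hslo : ∀ n : ℕ, 1 ≤ n → -K ≤ s n := by
    intro n hn
    have hn0 : (0 : ℝ) < n := by exact_mod_cast hn
    rw [hs]
    simp only []
    rw [le_div_iff₀ hn0]
    have := hlogTlow n
    nlinarith
  have hbddab : IsBoundedUnder (· ≤ ·) atTop s :=
    isBoundedUnder_of_eventually_le (a := Kup) (eventually_atTop.mpr ⟨1, hup⟩)
  have hbddbe : IsBoundedUnder (· ≥ ·) atTop s :=
    isBoundedUnder_of_eventually_ge (a := -K) (eventually_atTop.mpr ⟨1, hslo⟩)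
  set L := limsup s atTop with hL
  have hmain : ∀ c : ℝ, c < L → ∀ᶠ k in atTop, c ≤ s k := by
    intro c hc
    set c₁ : ℝ := (c + L) / 2 with hc₁
    set c₂ : ℝ := (c₁ + L) / 2 with hc₂
    have hcc₁ : c < c₁ := by rw [hc₁]; linarith
    have hc₁c₂ : c₁ < c₂ := by rw [hc₂]; linarith
    have hc₂L : c₂ < L := by rw [hc₂]; linarith
    set c₀ : ℝ := -Real.log ρ with hc₀
    obtain ⟨m₀, hm₀⟩ := exists_nat_ge ((c₀ + |c₁| * N) / (c₂ - c₁))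
    have hfreq := frequently_lt_of_lt_limsup (hbddbe.isCoboundedUnder_le) hc₂L
    rw [frequently_atTop] at hfreq
    obtain ⟨m, hmge, hsm⟩ := hfreq (max m₀ 1)
    have hm1 : 1 ≤ m := le_trans (le_max_right _ _) hmge
    have hmm₀ : m₀ ≤ m := le_trans (le_max_left _ _) hmge
    have hm0R : (0 : ℝ) < m := by exact_mod_cast hm1
    obtain ⟨j, hjN, hstep⟩ := hblock m
    set m' : ℕ := m + j with hm'
    have hm'1 : 1 ≤ m' := le_trans hm1 (Nat.le_add_right _ _)
    have hm'0R : (0 : ℝ) < m' := by exact_mod_cast hm'1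
    set γ : ℝ := ρ * T m with hγ
    have hγpos : 0 < γ := mul_pos hρ (hTpos m)
    have hstep' : ∀ n, γ * T n ≤ T (n + m') := by
      intro n
      calc γ * T n = ρ * (T m * T n) := by rw [hγ]; ring
        _ ≤ T (n + (m + j)) := hstep n
    have hiter := iterate_ineq T γ hγpos.le m' hstep' (fun n => (hTpos n).le)
    have hloggam : (m : ℝ) * c₂ - c₀ ≤ Real.log γ := by
      rw [hγ, Real.log_mul (ne_of_gt hρ) (ne_of_gt (hTpos m)), hc₀]
      have hsm' : c₂ * m ≤ Real.log (T m) := by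
        have h : c₂ < Real.log (T m) / m := hsm
        rw [lt_div_iff₀ hm0R] at h
        linarith
      nlinarith
    have hgam_div : c₁ ≤ Real.log γ / m' := by
      rw [le_div_iff₀ hm'0R]
      have h1 : c₀ + |c₁| * N ≤ (m : ℝ) * (c₂ - c₁) := by
        have h2 : ((c₀ + |c₁| * N) / (c₂ - c₁)) * (c₂ - c₁) ≤ (m : ℝ) * (c₂ - c₁) := by
          apply mul_le_mul_of_nonneg_right _ (by linarith)
          calc ((c₀ + |c₁| * N) / (c₂ - c₁)) ≤ (m₀ : ℝ) := hm₀
            _ ≤ (m : ℝ) := by exact_mod_cast hmm₀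
        rwa [div_mul_cancel₀ _ (by linarith : c₂ - c₁ ≠ 0)] at h2
      have h3 : c₁ * m' ≤ c₁ * m + |c₁| * N := by
        have hj' : (j : ℝ) ≤ N := by exact_mod_cast hjN
        have h4 : c₁ * (j : ℝ) ≤ |c₁| * N := by
          calc c₁ * (j : ℝ) ≤ |c₁| * (j : ℝ) :=
                mul_le_mul_of_nonneg_right (le_abs_self c₁) (Nat.cast_nonneg j)
            _ ≤ |c₁| * N := mul_le_mul_of_nonneg_left hj' (abs_nonneg c₁)
        have hcast : (m' : ℝ) = (m : ℝ) + (j : ℝ) := by rw [hm']; push_cast; ring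
        rw [hcast]
        nlinarith
      calc c₁ * m' ≤ c₁ * m + |c₁| * N := h3
        _ ≤ (m : ℝ) * c₂ - c₀ := by nlinarith
        _ ≤ Real.log γ := hloggam
    set B : ℝ := 2 * |Real.log γ| + 2 * m' * K with hB
    have hBnn : 0 ≤ B := by
      rw [hB]
      have := abs_nonneg (Real.log γ)
      positivity
    obtain ⟨K₁, hK₁⟩ := exists_nat_ge (B / (c₁ - c))
    rw [eventually_atTop]
    refine ⟨max m' (max K₁ 1), fun k hk => ?_⟩
    have hkm' : m' ≤ k := le_trans (le_max_left _ _) hk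
    have hkK₁ : K₁ ≤ k := le_trans (le_trans (le_max_left _ _) (le_max_right _ _)) hk
    have hk1 : 1 ≤ k := le_trans (le_trans (le_max_right _ _) (le_max_right _ _)) hk
    have hk0R : (0 : ℝ) < k := by exact_mod_cast hk1
    have hdiv1 : 1 ≤ k / m' := (Nat.one_le_div_iff (by omega)).mpr hkm'
    set t : ℕ := k / m' - 1 with ht
    set n : ℕ := k % m' + m' with hn
    have hkdec : n + t * m' = k := by
      have h1 : m' * (k / m') + k % m' = k := Nat.div_add_mod k m'
      have h2 : t * m' = m' * (k / m') - m' := by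
        rw [ht, Nat.sub_mul, one_mul, Nat.mul_comm]
      have h3 : m' * 1 ≤ m' * (k / m') := Nat.mul_le_mul_left m' hdiv1
      omega
    have hnlt : n < 2 * m' := by
      have := Nat.mod_lt k (show 0 < m' by omega)
      omega
    have htle : (t : ℝ) ≤ (k : ℝ) / m' := by
      have h1 : (t : ℝ) ≤ ((k / m' : ℕ) : ℝ) := by
        exact_mod_cast Nat.sub_le _ _
      exact h1.trans Nat.cast_div_le
    have htge : (k : ℝ) / m' - 2 ≤ (t : ℝ) := by
      have hcast : (t : ℝ) = ((k / m' : ℕ) : ℝ) - 1 := by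
        rw [ht, Nat.cast_sub hdiv1, Nat.cast_one]
      have h1 : (k : ℝ) / m' < ((k / m' : ℕ) : ℝ) + 1 := by
        rw [div_lt_iff₀ hm'0R]
        have h2 := Nat.div_add_mod k m'
        have h3 : ((k % m' : ℕ) : ℝ) < (m' : ℝ) := by
          exact_mod_cast Nat.mod_lt k (show 0 < m' by omega)
        have h4 : (m' : ℝ) * ((k / m' : ℕ) : ℝ) + ((k % m' : ℕ) : ℝ) = (k : ℝ) := by
          exact_mod_cast h2
        nlinarith
      rw [hcast]
      linarith
    have hlogk : (t : ℝ) * Real.log γ + Real.log (T n) ≤ Real.log (T k) := by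
      have h1 := hiter t n
      rw [hkdec] at h1
      have h2 := Real.log_le_log (mul_pos (pow_pos hγpos t) (hTpos n)) h1
      rwa [Real.log_mul (ne_of_gt (pow_pos hγpos t)) (ne_of_gt (hTpos n)), Real.log_pow] at h2
    have hlogn : -(2 * (m' : ℝ) * K) ≤ Real.log (T n) := by
      have h1 := hlogTlow n
      have h2 : (n : ℝ) ≤ 2 * m' := by exact_mod_cast hnlt.le
      nlinarith
    have htgam : (k : ℝ) / m' * Real.log γ - 2 * |Real.log γ| ≤ (t : ℝ) * Real.log γ := by
      nlinarith [le_abs_self (Real.log γ), neg_abs_le (Real.log γ), abs_nonneg (Real.log γ)]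
    have h5 : (k : ℝ) / m' * Real.log γ - B ≤ Real.log (T k) := by
      rw [hB]
      linarith
    have hsk : Real.log γ / m' - B / k ≤ s k := by
      have h6 : ((k : ℝ) / m' * Real.log γ - B) / k = Real.log γ / m' - B / k := by
        field_simp
      have h7 : ((k : ℝ) / m' * Real.log γ - B) / k ≤ Real.log (T k) / k :=
        div_le_div_of_nonneg_right h5 hk0R.le
      rw [h6] at h7
      exact h7
    have h8 : B / k ≤ c₁ - c := by
      rw [div_le_iff₀ hk0R]
      rw [div_le_iff₀ (by linarith : (0:ℝ) < c₁ - c)] at hK₁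
      have h9 : (K₁ : ℝ) ≤ (k : ℝ) := by exact_mod_cast hkK₁
      nlinarith
    have : c ≤ Real.log γ / m' - B / k := by linarith
    linarith [hsk]
  have hliminf : L ≤ liminf s atTop := by
    by_contra h
    push_neg at h
    have hcl : (liminf s atTop + L) / 2 < L := by linarith
    have h2 := hmain _ hcl
    have h3 : (liminf s atTop + L) / 2 ≤ liminf s atTop :=
      le_liminf_of_le (hbddab.isCoboundedUnder_ge) h2
    linarith
  exact ⟨L, tendsto_of_liminf_eq_limsup
    (le_antisymm (liminf_le_limsup hbddab hbddbe) hliminf) rfl hbddab hbddbe⟩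


/-- For a continuous, open, distance expanding, topologically transitive map on a
nonempty compact metric space and a Hölder continuous potential, the limit
`P(φ) = lim (1/n) log ∑_{x ∈ f^{-n}(x₀)} exp (S_n φ x)` exists and is
independent of `x₀`. -/
theorem tree_pressure_limit_exists {X : Type*} [MetricSpace X] [CompactSpace X] [Nonempty X]
    (f : X → X) (φ : X → ℝ) (hf : Continuous f) (hopen : IsOpenMap f)
    (hexp : DistanceExpanding f) (htrans : TopologicallyTransitive f)
    (hφ : HolderPotential φ) :
    ∃ P : ℝ, ∀ x₀ : X,
      Tendsto (fun n : ℕ => (1 / n : ℝ) * Real.log (treeSum f φ n x₀)) atTop (nhds P) := by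
  classical
  obtain ⟨lam, hlam, η, hη, hexp'⟩ := hexp
  obtain ⟨C, hCpos, b, hb, hHold⟩ := hφ
  have hb0 : 0 < b := hb.1
  have hC0 : 0 ≤ C := hCpos.le
  set p₀ := Classical.arbitrary X with hp₀
  obtain ⟨R, hRsub⟩ := (isCompact_univ (X := X)).isBounded.subset_closedBall p₀
  have hR : ∀ x : X, dist x p₀ ≤ R := fun x => by
    have := hRsub (Set.mem_univ x)
    rwa [Metric.mem_closedBall] at this
  set K : ℝ := |φ p₀| + C * (max R 1) ^ b with hKdef
  have hmaxpos : (0 : ℝ) < max R 1 := lt_of_lt_of_le one_pos (le_max_right _ _)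
  have hK : ∀ x : X, |φ x| ≤ K := by
    intro x
    have h1 := hHold x p₀
    have h2 : dist x p₀ ^ b ≤ (max R 1) ^ b :=
      Real.rpow_le_rpow dist_nonneg ((hR x).trans (le_max_left _ _)) hb0.le
    have h3 : |φ x| ≤ |φ x - φ p₀| + |φ p₀| := by
      calc |φ x| = |φ x - φ p₀ + φ p₀| := by ring_nf
        _ ≤ |φ x - φ p₀| + |φ p₀| := abs_add_le _ _
    have h4 : C * dist x p₀ ^ b ≤ C * (max R 1) ^ b := mul_le_mul_of_nonneg_left h2 hC0
    rw [hKdef]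
    linarith
  have hK0 : 0 ≤ K := by
    have h1 : 0 ≤ C * (max R 1) ^ b := mul_nonneg hC0 (Real.rpow_nonneg hmaxpos.le b)
    rw [hKdef]
    linarith [abs_nonneg (φ p₀)]
  have hfin := fiber_finite f hf hlam hη hexp'
  have hsurj := f_surjective f hf hopen htrans
  obtain ⟨M, hM0, hMcard⟩ := card_bound f hlam hη hexp' hfin
  obtain ⟨ε, hε, hεη, hlift⟩ := lift_one f hf hopen hlam hη hexp'
  obtain ⟨N, hconn⟩ := connect f htrans hlam hε hlift
  have hkey := key_one f φ hfin hsurj hlam hη hexp' hC0 hb0 hHold hε hεη hlift hK hK0 hconn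
  set ρ₀ : ℝ := Real.exp (-(N * K) - C * ε ^ b * (lam⁻¹ ^ b * (1 - lam⁻¹ ^ b)⁻¹)) with hρ₀
  have hρ₀pos : 0 < ρ₀ := Real.exp_pos _
  have hblockall := block_ineq f φ hfin hsurj hK hρ₀pos hkey
  have hTpos : ∀ (x₀ : X) (n : ℕ), 0 < TS f φ hfin n x₀ :=
    fun x₀ n => TS_pos f φ hfin hsurj n x₀
  have hM1 : (1 : ℝ) ≤ (M : ℝ) := by exact_mod_cast hM0
  have hlogM : 0 ≤ Real.log M := Real.log_nonneg hM1
  have hup : ∀ (x₀ : X) (n : ℕ), 1 ≤ n →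
      Real.log (TS f φ hfin n x₀) / n ≤ 2 * Real.log M + K := by
    intro x₀ n hn
    have hn0 : (0 : ℝ) < n := by exact_mod_cast hn
    have h1 : TS f φ hfin n x₀ ≤ (M : ℝ) ^ (n + 1) * Real.exp (n * K) := by
      refine le_trans (TS_le_card f φ hfin hK n x₀) ?_
      apply mul_le_mul_of_nonneg_right _ (Real.exp_pos _).le
      have := hMcard n x₀
      calc ((hfin n x₀).toFinset.card : ℝ) ≤ ((M ^ (n + 1) : ℕ) : ℝ) := by exact_mod_cast this
        _ = (M : ℝ) ^ (n + 1) := by push_cast; ring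
    have h2 : Real.log (TS f φ hfin n x₀) ≤ (n + 1 : ℝ) * Real.log M + n * K := by
      have h3 := Real.log_le_log (hTpos x₀ n) h1
      rw [Real.log_mul (by positivity) (ne_of_gt (Real.exp_pos _)), Real.log_pow,
        Real.log_exp] at h3
      calc Real.log (TS f φ hfin n x₀) ≤ ((n + 1 : ℕ) : ℝ) * Real.log M + n * K := h3
        _ = (n + 1 : ℝ) * Real.log M + n * K := by push_cast; ring
    rw [div_le_iff₀ hn0]
    have hn1 : (1 : ℝ) ≤ (n : ℝ) := by exact_mod_cast hn
    nlinarith [mul_le_mul_of_nonneg_left (by linarith : (n : ℝ) + 1 ≤ 2 * n) hlogM]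
  have hTlow : ∀ (x₀ : X) (n : ℕ), Real.exp (-(n * K)) ≤ TS f φ hfin n x₀ :=
    fun x₀ n => TS_ge f φ hfin hsurj hK n x₀
  have hlim : ∀ x₀ : X, ∃ L : ℝ,
      Tendsto (fun n : ℕ => Real.log (TS f φ hfin n x₀) / n) atTop (𝓝 L) := by
    intro x₀
    exact tendsto_of_block (fun n => TS f φ hfin n x₀) (hTpos x₀) (hup x₀) hK0 (hTlow x₀)
      (div_pos hρ₀pos (by positivity : (0:ℝ) < (N : ℝ) + 1)) (hblockall x₀)
  choose Lfun hLfun using hlim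
  have hcross : ∀ x₀ y₀ : X, Lfun x₀ ≤ Lfun y₀ := by
    intro x₀ y₀
    obtain ⟨j, hjN, hkey2⟩ := hkey x₀ y₀
    have h1 : Tendsto (fun n : ℕ => Real.log (TS f φ hfin (n + j) y₀) / ((n : ℝ) + j))
        atTop (𝓝 (Lfun y₀)) := by
      have h1a := (hLfun y₀).comp (tendsto_add_atTop_nat j)
      refine h1a.congr (fun n => ?_)
      show Real.log (TS f φ hfin (n + j) y₀) / ((n + j : ℕ) : ℝ) = _
      push_cast
      ring
    have h2 : Tendsto (fun n : ℕ => (Real.log ρ₀ + Real.log (TS f φ hfin n x₀)) / ((n : ℝ) + j))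
        atTop (𝓝 (Lfun x₀)) := by
      have h2a : Tendsto (fun n : ℕ => Real.log ρ₀ / ((n : ℝ) + j)) atTop (𝓝 0) := by
        have := (tendsto_const_div_atTop_nhds_zero_nat (Real.log ρ₀)).comp
          (tendsto_add_atTop_nat j)
        refine this.congr (fun n => ?_)
        show Real.log ρ₀ / ((n + j : ℕ) : ℝ) = _
        push_cast
        ring
      have h2b : Tendsto (fun n : ℕ => (n : ℝ) / ((n : ℝ) + j)) atTop (𝓝 1) :=
        tendsto_natCast_div_add_atTop (j : ℝ)
      have h2c := h2a.add (((hLfun x₀).mul h2b))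
      rw [zero_add, mul_one] at h2c
      apply h2c.congr'
      filter_upwards [eventually_ge_atTop 1] with n hn
      have hn0 : ((n : ℝ)) ≠ 0 := by
        have : (0 : ℝ) < n := by exact_mod_cast hn
        linarith
      have hnj : ((n : ℝ) + j) ≠ 0 := by positivity
      field_simp
      try ring
    have hineq : ∀ n : ℕ,
        (Real.log ρ₀ + Real.log (TS f φ hfin n x₀)) / ((n : ℝ) + j)
          ≤ Real.log (TS f φ hfin (n + j) y₀) / ((n : ℝ) + j) := by
      intro n
      apply div_le_div_of_nonneg_right _ (by positivity : (0:ℝ) ≤ (n : ℝ) + j)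
      have h3 := hkey2 n
      have h4 := Real.log_le_log (mul_pos hρ₀pos (hTpos x₀ n)) h3
      rwa [Real.log_mul (ne_of_gt hρ₀pos) (ne_of_gt (hTpos x₀ n))] at h4
    exact le_of_tendsto_of_tendsto' h2 h1 hineq
  refine ⟨Lfun p₀, fun x₀ => ?_⟩
  have hEq : Lfun x₀ = Lfun p₀ := le_antisymm (hcross x₀ p₀) (hcross p₀ x₀)
  have hfinal := hLfun x₀
  rw [hEq] at hfinal
  refine hfinal.congr (fun n => ?_)
  rw [treeSum_eq_TS f φ hfin n x₀, one_div, inv_mul_eq_div]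
end

section
/- Let (X,d) be a nonempty compact metric space, f : X → X a continuous, open, distance expanding map, and φ : X → ℝ continuous. Suppose a Borel probability measure m on X and λ > 0 satisfy ∫_X (L_φ g) dm = λ·∫_X g dm for every continuous g : X → ℝ, where (L_φ g)(x) = Σ_{y ∈ f^{−1}(x)} g(y)·e^{φ(y)}. Then for every Borel set Y ⊆ X on which f is injective, m(f(Y)) = λ·∫_Y e^{−φ} dm; that is, f has Jacobian λ·e^{−φ} with respect to m, so m is φ-conformal with parameter λ. -/
/-!
On a ball `U` small enough for `f` to be injective, the open map `f` has a continuous inverse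
branch `s : f U → U`. For continuous `g` supported in `U` the fiber sum collapses,
`L_φ (g e^{-φ}) = 𝟙_{f U} · (g ∘ s)`, so the eigen-equation says that `s_* (m|_{f U})` and
`lam e^{-φ} m` integrate every such `g` alike. Weighting both measures by an Urysohn function
that is `1` on a smaller closed ball `K` turns this into equality of the measures on `K`, that is
`m (f A) = lam ∫_A e^{-φ} dm` for Borel `A ⊆ K`. Finally `X` is covered by countably many such
`K`, and since `f` is injective on `Y`, both sides are countably additive along the induced
partition of `Y` (images of Borel sets being Borel by Lusin–Souslin).
-/

open MeasureTheory Filter Metric Set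

/-- The transfer (Perron–Frobenius–Ruelle) operator
`(L_φ g)(x) = ∑_{y ∈ f⁻¹(x)} g(y) e^{φ(y)}`
(a `tsum` over the fiber, which is finite in the situations considered). -/
noncomputable def transferOp {X : Type*} (f : X → X) (φ : X → ℝ) (g : X → ℝ) (x : X) : ℝ :=
  ∑' y : (f ⁻¹' {x} : Set X), g y * Real.exp (φ y)

open Function
open scoped ENNReal

section LocalInverse

variable {α β : Type*} [Nonempty α] {f : α → β} {U : Set α}

theorem Set.InjOn.image_eq_image_inter_preimage_invFunOn (hinj : InjOn f U) {A : Set α}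
    (hAU : A ⊆ U) : f '' A = f '' U ∩ invFunOn f U ⁻¹' A :=
  (hinj.toPartialEquiv f U).image_eq_target_inter_inv_preimage hAU

theorem Set.InjOn.tsum_fiber_eq_indicator {M : Type*} [AddCommMonoid M] [TopologicalSpace M]
    (hinj : InjOn f U) {F : α → M} (hF : support F ⊆ U) (b : β) :
    ∑' a : f ⁻¹' {b}, F a = (f '' U).indicator (F ∘ invFunOn f U) b := by
  by_cases hb : b ∈ f '' U
  · rw [indicator_of_mem hb]
    refine tsum_eq_single (⟨invFunOn f U b, invFunOn_eq hb⟩ : f ⁻¹' {b}) fun a hne => ?_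
    by_contra hFa
    exact hne (Subtype.ext (hinj (hF hFa) (invFunOn_mem hb) (a.2.trans (invFunOn_eq hb).symm)))
  · rw [indicator_of_notMem hb]
    refine (tsum_congr fun a => ?_).trans tsum_zero
    by_contra hFa
    exact hb ⟨a, hF hFa, a.2⟩

variable [TopologicalSpace α] [TopologicalSpace β]

theorem IsOpenMap.continuousOn_invFunOn_image (hopen : IsOpenMap f) (hf : ContinuousOn f U)
    (hU : IsOpen U) (hinj : InjOn f U) : ContinuousOn (invFunOn f U) (f '' U) :=
  (OpenPartialHomeomorph.ofContinuousOpen (hinj.toPartialEquiv f U) hf hopen hU).continuousOn_symm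

end LocalInverse

theorem DistanceExpanding.exists_injOn_ball {X : Type*} [MetricSpace X] {f : X → X}
    (hf : DistanceExpanding f) : ∃ r > 0, ∀ c : X, InjOn f (ball c r) := by
  obtain ⟨l, hl, η, hη, hexp⟩ := hf
  refine ⟨η / 2, by positivity, fun c x hx y hy hxy => dist_le_zero.1 ?_⟩
  have hxy_le : dist x y ≤ η := by
    linarith [dist_triangle_right x y c, mem_ball.1 hx, mem_ball.1 hy]
  have := hexp x y hxy_le
  rw [hxy, dist_self] at this
  nlinarith [dist_nonneg (x := x) (y := y)]

theorem MeasureTheory.Measure.restrict_eq_of_forall_integral_eq_of_support_subset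
    {X : Type*} [TopologicalSpace X] [NormalSpace X] [HasOuterApproxClosed X]
    [MeasurableSpace X] [BorelSpace X] {μ ν : Measure X} [IsFiniteMeasure μ] [IsFiniteMeasure ν]
    {K U : Set X} (hK : IsClosed K) (hU : IsOpen U) (hKU : K ⊆ U)
    (h : ∀ g : X → ℝ, Continuous g → support g ⊆ U → ∫ x, g x ∂μ = ∫ x, g x ∂ν) :
    μ.restrict K = ν.restrict K := by
  obtain ⟨ψ, hψU, hψK, hψ01⟩ := exists_continuous_zero_one_of_isClosed hU.isClosed_compl hK
    (disjoint_compl_left_iff_subset.2 hKU)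
  set ρ : X → ℝ≥0∞ := fun x => ENNReal.ofReal (ψ x)
  have hρ : Measurable ρ := ENNReal.measurable_ofReal.comp ψ.continuous.measurable
  have hψ_le : ∀ x, ‖ψ x‖ ≤ 1 := fun x => by
    rw [Real.norm_of_nonneg (hψ01 x).1]; exact (hψ01 x).2
  have hψU' : support ψ ⊆ U := fun x hx => by_contra fun hxU => hx (hψU hxU)
  have hweighted : μ.withDensity ρ = ν.withDensity ρ := by
    have : IsFiniteMeasure (μ.withDensity ρ) :=
      isFiniteMeasure_withDensity_ofReal (HasFiniteIntegral.of_bounded (ae_of_all _ hψ_le))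
    have : IsFiniteMeasure (ν.withDensity ρ) :=
      isFiniteMeasure_withDensity_ofReal (HasFiniteIntegral.of_bounded (ae_of_all _ hψ_le))
    refine ext_of_forall_integral_eq_of_IsFiniteMeasure fun G => ?_
    simp only [integral_withDensity_eq_integral_toReal_smul hρ
      (ae_of_all _ fun _ => ENNReal.ofReal_lt_top), ρ, ENNReal.toReal_ofReal (hψ01 _).1,
      smul_eq_mul]
    exact h _ (ψ.continuous.mul G.continuous) ((support_mul_subset_left _ _).trans hψU')
  have hK_one : ∀ μ : Measure X, (μ.withDensity ρ).restrict K = μ.restrict K := fun μ => by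
    rw [restrict_withDensity hK.measurableSet, withDensity_congr_ae (g := 1), withDensity_one]
    filter_upwards [ae_restrict_mem hK.measurableSet] with x hx
    simp [ρ, hψK hx]
  rw [← hK_one μ, hweighted, hK_one]

theorem DenseRange.iUnion_closedBall_eq_univ {X ι : Type*} [PseudoMetricSpace X] {u : ι → X}
    (hu : DenseRange u) {r : ℝ} (hr : 0 < r) : ⋃ i, closedBall (u i) r = univ :=
  eq_univ_of_forall fun x =>
    let ⟨i, hi⟩ := hu.exists_dist_lt x hr
    mem_iUnion.2 ⟨i, mem_closedBall.2 hi.le⟩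

theorem MeasureTheory.measure_image_eq_of_iUnion_eq_univ {X Z : Type*} [TopologicalSpace X]
    [PolishSpace X] [MeasurableSpace X] [BorelSpace X] [TopologicalSpace Z] [T2Space Z]
    [MeasurableSpace Z] [OpensMeasurableSpace Z] {f : X → Z} (hf : Continuous f)
    {m : Measure Z} {ν : Measure X} {K : ℕ → Set X} (hKm : ∀ n, MeasurableSet (K n))
    (hK : ⋃ n, K n = univ)
    (hloc : ∀ n A, MeasurableSet A → A ⊆ K n → m (f '' A) = ν A)
    {Y : Set X} (hY : MeasurableSet Y) (hinj : InjOn f Y) : m (f '' Y) = ν Y := by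
  set P : ℕ → Set X := fun n => Y ∩ disjointed K n
  have hPm : ∀ n, MeasurableSet (P n) := fun n => hY.inter (MeasurableSet.disjointed hKm n)
  have hPY : ∀ n, P n ⊆ Y := fun n => inter_subset_left
  have hP : ⋃ n, P n = Y := by rw [← inter_iUnion, iUnion_disjointed, hK, inter_univ]
  have hPdisj : Pairwise (Disjoint on P) := fun i j hij =>
    (disjoint_disjointed K hij).mono inter_subset_right inter_subset_right
  have himage_disj : Pairwise (Disjoint on fun n => f '' P n) := fun i j hij =>
    (hPdisj hij).image hinj (hPY i) (hPY j)
  calc m (f '' Y) = ∑' n, m (f '' P n) := by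
        rw [← hP, image_iUnion, measure_iUnion himage_disj fun n =>
          (hPm n).image_of_continuousOn_injOn hf.continuousOn (hinj.mono (hPY n))]
    _ = ∑' n, ν (P n) :=
        tsum_congr fun n => hloc n _ (hPm n) (inter_subset_right.trans (disjointed_subset K n))
    _ = ν Y := by rw [← measure_iUnion hPdisj hPm, hP]

def IsEigenmeasure {X : Type*} [TopologicalSpace X] [MeasurableSpace X] (f : X → X)
    (φ : X → ℝ) (m : Measure X) (lam : ℝ) : Prop :=
  ∀ g : X → ℝ, Continuous g → ∫ x, transferOp f φ g x ∂m = lam * ∫ x, g x ∂m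

namespace IsEigenmeasure

variable {X : Type*} [TopologicalSpace X] [MeasurableSpace X] [Nonempty X] {f : X → X}
  {φ : X → ℝ} {m : Measure X} {lam : ℝ} {U : Set X}

theorem setIntegral_image_invFunOn (he : IsEigenmeasure f φ m lam) (hφ : Continuous φ)
    (hinj : InjOn f U) (hfU : MeasurableSet (f '' U)) {g : X → ℝ} (hg : Continuous g)
    (hgU : support g ⊆ U) :
    ∫ x in f '' U, g (invFunOn f U x) ∂m = lam * ∫ x, g x * Real.exp (-φ x) ∂m := by
  rw [← he (fun x => g x * Real.exp (-φ x)) (by fun_prop), ← integral_indicator hfU]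
  congr 1
  funext x
  simp only [transferOp, mul_assoc, ← Real.exp_add, neg_add_cancel, Real.exp_zero, mul_one]
  exact (hinj.tsum_fiber_eq_indicator hgU x).symm

variable [CompactSpace X] [NormalSpace X] [HasOuterApproxClosed X] [BorelSpace X]
  [IsFiniteMeasure m] {K : Set X}

theorem measure_image_eq_withDensity (he : IsEigenmeasure f φ m lam) (hf : Continuous f)
    (hopen : IsOpenMap f) (hφ : Continuous φ) (hlam : 0 ≤ lam) (hU : IsOpen U)
    (hinj : InjOn f U) (hK : IsClosed K) (hKU : K ⊆ U) {A : Set X} (hA : MeasurableSet A)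
    (hAK : A ⊆ K) :
    m (f '' A) = m.withDensity (fun x => ENNReal.ofReal (lam * Real.exp (-φ x))) A := by
  set ν := m.withDensity fun x => ENNReal.ofReal (lam * Real.exp (-φ x))
  set μ := (m.restrict (f '' U)).map (invFunOn f U)
  have hfU : MeasurableSet (f '' U) := (hopen U hU).measurableSet
  have hs : AEMeasurable (invFunOn f U) (m.restrict (f '' U)) :=
    (hopen.continuousOn_invFunOn_image hf.continuousOn hU hinj).aemeasurable hfU
  have hρ : Continuous fun x => lam * Real.exp (-φ x) := by fun_prop
  have : IsFiniteMeasure ν := isFiniteMeasure_withDensity_ofReal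
    (hρ.integrable_of_hasCompactSupport (.of_compactSpace _)).hasFiniteIntegral
  have hμν : μ.restrict K = ν.restrict K := by
    refine Measure.restrict_eq_of_forall_integral_eq_of_support_subset hK hU hKU
      fun g hg hgU => ?_
    rw [integral_map hs hg.aestronglyMeasurable, he.setIntegral_image_invFunOn hφ hinj hfU hg hgU,
      integral_withDensity_eq_integral_toReal_smul hρ.measurable.ennreal_ofReal
        (ae_of_all _ fun _ => ENNReal.ofReal_lt_top), ← integral_const_mul]
    congr 1
    funext x
    rw [ENNReal.toReal_ofReal (by positivity), smul_eq_mul]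
    ring
  calc m (f '' A) = μ A := by
        rw [Measure.map_apply_of_aemeasurable hs hA, Measure.restrict_apply' hfU, inter_comm,
          ← hinj.image_eq_image_inter_preimage_invFunOn (hAK.trans hKU)]
    _ = ν A := by rw [← Measure.restrict_eq_self _ hAK, hμν, Measure.restrict_eq_self _ hAK]

end IsEigenmeasure

/-- **The eigen-measure is conformal.** If `m` is a probability measure with
`∫ L_φ g dm = lam * ∫ g dm` for every continuous `g`, then for every Borel set `Y`
on which `f` is injective, `m (f '' Y) = lam * ∫_Y e^{-φ} dm`; i.e. `f` has Jacobian
`lam * e^{-φ}` with respect to `m`, so `m` is `φ`-conformal with parameter `lam`. -/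
theorem eigenmeasure_is_conformal {X : Type*} [MetricSpace X] [CompactSpace X]
    [Nonempty X] [MeasurableSpace X] [BorelSpace X]
    (f : X → X) (φ : X → ℝ) (hf : Continuous f) (hopen : IsOpenMap f)
    (hexp : DistanceExpanding f) (hφ : Continuous φ)
    (m : Measure X) (hm : IsProbabilityMeasure m) (lam : ℝ) (hlam : 0 < lam)
    (heig : ∀ g : X → ℝ, Continuous g →
      ∫ x, transferOp f φ g x ∂m = lam * ∫ x, g x ∂m) :
    ∀ Y : Set X, MeasurableSet Y → Set.InjOn f Y →
      (m (f '' Y)).toReal = lam * ∫ y in Y, Real.exp (-(φ y)) ∂m := by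
  intro Y hY hinj
  obtain ⟨r, hr, hinj_ball⟩ := hexp.exists_injOn_ball
  obtain ⟨u, hu⟩ := TopologicalSpace.exists_dense_seq X
  have hloc : ∀ n A, MeasurableSet A → A ⊆ closedBall (u n) (r / 2) →
      m (f '' A) = m.withDensity (fun x => ENNReal.ofReal (lam * Real.exp (-φ x))) A :=
    fun n _ hA hAK => IsEigenmeasure.measure_image_eq_withDensity heig hf hopen hφ hlam.le
      isOpen_ball (hinj_ball (u n)) isClosed_closedBall (closedBall_subset_ball (half_lt_self hr))
      hA hAK
  have hρ : Integrable (fun x => lam * Real.exp (-φ x)) m :=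
    (by fun_prop : Continuous fun x => lam * Real.exp (-φ x)).integrable_of_hasCompactSupport
      (.of_compactSpace _)
  rw [measure_image_eq_of_iUnion_eq_univ hf (fun n => measurableSet_closedBall)
      (hu.iUnion_closedBall_eq_univ (half_pos hr)) hloc hY hinj, withDensity_apply _ hY,
    ← ofReal_integral_eq_lintegral_ofReal hρ.restrict (ae_of_all _ fun _ => by positivity),
    ENNReal.toReal_ofReal (integral_nonneg fun _ => by positivity), integral_const_mul]
end

section
/- Let (X,d) be a metric space, K ≥ 1, and for each n ≥ 1 let A_n ⊆ X be a finite set with card(A_n) ≤ K·n. Call a point z ∈ X safe if z ∉ ⋃_{n≥1} A_n and for every δ > 0 there is N such that for all n ≥ N the ball B(z, e^{−δn}) is disjoint from A_n. Then the set of points of X that are not safe has Hausdorff dimension 0. -/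
/-!
A non-safe point either lies in the countable set `⋃ A n`, or, for some `c = 1/(k+1)`, lies
in infinitely many of the sets `⋃ a ∈ A n, B(a, e^{-c n})`. For every `d > 0` these balls have
`∑ₙ card (A n) · (2 e^{-c n})^d ≤ 2^d K ∑ₙ n e^{-c d n} < ∞`, so by the Hausdorff–Cantelli
argument (cover the limsup set by the balls with `n ≥ N` and let `N → ∞`) the limsup set is
`μH[d]`-null. Hence each of these countably many sets has dimension `0`.
-/

open Metric Set MeasureTheory Filter
open scoped NNReal ENNReal Topology

theorem dimH_eq_zero_of_forall_hausdorffMeasure_eq_zero {X : Type*} [EMetricSpace X]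
    [MeasurableSpace X] [BorelSpace X] {s : Set X} (h : ∀ d : ℝ≥0, 0 < d → μH[d] s = 0) :
    dimH s = 0 := by
  refine nonpos_iff_eq_zero.1 (dimH_le fun d hd => ?_)
  rcases eq_zero_or_pos d with rfl | hpos
  · simp
  · simp [h d hpos] at hd

theorem hausdorffMeasure_limsup_eq_zero {X : Type*} [EMetricSpace X] [MeasurableSpace X]
    [BorelSpace X] {ι : ℕ → Type*} [∀ n, Countable (ι n)] (d : ℝ) (t : ∀ n, ι n → Set X)
    {r : ℕ → ℝ≥0∞} (hr_anti : Antitone r) (hr : Tendsto r atTop (𝓝 0))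
    (ht : ∀ n i, ediam (t n i) ≤ r n) (hsum : ∑' n, ∑' i, ediam (t n i) ^ d ≠ ∞) :
    μH[d] (limsup (fun n => ⋃ i, t n i) atTop) = 0 := by
  have hcover (N : ℕ) :
      limsup (fun n => ⋃ i, t n i) atTop ⊆ ⋃ p : Σ m, ι (m + N), t (p.1 + N) p.2 := by
    intro x hx
    obtain ⟨n, hn, hxn⟩ := frequently_atTop.1 (mem_limsup_iff_frequently_mem.1 hx) N
    obtain ⟨i, hi⟩ := mem_iUnion.1 hxn
    obtain ⟨m, rfl⟩ := Nat.exists_eq_add_of_le' hn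
    exact mem_iUnion.2 ⟨⟨m, i⟩, hi⟩
  have hdiam : ∀ N (p : Σ m, ι (m + N)), ediam (t (p.1 + N) p.2) ≤ r N := fun N p =>
    (ht _ _).trans (hr_anti (Nat.le_add_left _ _))
  refine nonpos_iff_eq_zero.1 ((Measure.hausdorffMeasure_le_liminf_tsum d _ r hr _
    (Eventually.of_forall hdiam) (Eventually.of_forall hcover)).trans_eq ?_)
  simp_rw [ENNReal.tsum_sigma']
  exact (ENNReal.tendsto_sum_nat_add _ hsum).liminf_eq

theorem ediam_ball_le_ofReal {X : Type*} [PseudoMetricSpace X] (x : X) (ρ : ℝ) :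
    ediam (ball x ρ) ≤ ENNReal.ofReal (2 * ρ) := by
  rw [← eball_ofReal, ENNReal.ofReal_mul zero_le_two, ENNReal.ofReal_ofNat]
  exact ediam_eball_le

theorem hausdorffMeasure_limsup_biUnion_ball_eq_zero {X : Type*} [MetricSpace X]
    [MeasurableSpace X] [BorelSpace X] (d : ℝ) (hd : 0 ≤ d) {A : ℕ → Set X}
    (hA : ∀ n, (A n).Finite) {ρ : ℕ → ℝ} (hρ_anti : Antitone ρ) (hρ : Tendsto ρ atTop (𝓝 0))
    (hsum : Summable fun n => (A n).ncard * (2 * ρ n) ^ d) :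
    μH[d] (limsup (fun n => ⋃ a ∈ A n, ball a (ρ n)) atTop) = 0 := by
  have := fun n => (hA n).countable.to_subtype
  simp_rw [biUnion_eq_iUnion]
  refine hausdorffMeasure_limsup_eq_zero d (fun n (a : A n) => ball (a : X) (ρ n))
    (r := fun n => ENNReal.ofReal (2 * ρ n)) ?_ ?_ (fun n a => ediam_ball_le_ofReal _ _) ?_
  · exact fun m n hmn => ENNReal.ofReal_le_ofReal (by linarith [hρ_anti hmn])
  · simpa using ENNReal.tendsto_ofReal (hρ.const_mul 2)
  · refine ne_top_of_le_ne_top hsum.tsum_ofReal_ne_top (ENNReal.tsum_le_tsum fun n => ?_)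
    have hρ0 : 0 ≤ ρ n := hρ_anti.le_of_tendsto hρ n
    calc ∑' a : A n, ediam (ball (a : X) (ρ n)) ^ d
        ≤ ∑' a : A n, ENNReal.ofReal ((2 * ρ n) ^ d) := ENNReal.tsum_le_tsum fun a => by
          rw [← ENNReal.ofReal_rpow_of_nonneg (by positivity) hd]
          exact ENNReal.rpow_le_rpow (ediam_ball_le_ofReal _ _) hd
      _ = ENNReal.ofReal ((A n).ncard * (2 * ρ n) ^ d) := by
          rw [ENNReal.tsum_const, ENNReal.ofReal_mul (Nat.cast_nonneg _), ENNReal.ofReal_natCast,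
            ← Set.encard, ← (hA n).cast_ncard_eq, ENat.toENNReal_coe]

theorem summable_mul_two_mul_exp_rpow (K : ℝ) {c d : ℝ} (hc : 0 < c) (hd : 0 < d) :
    Summable fun n : ℕ => K * n * (2 * Real.exp (-c * n)) ^ d := by
  refine ((Real.summable_pow_mul_exp_neg_nat_mul 1 (mul_pos hc hd)).mul_left (K * 2 ^ d)).congr
    fun n => ?_
  rw [Real.mul_rpow zero_le_two (Real.exp_pos _).le, ← Real.exp_mul]
  ring_nf

theorem dimH_limsup_biUnion_ball_exp_eq_zero {X : Type*} [MetricSpace X] (K : ℝ)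
    {A : ℕ → Set X} (hfin : ∀ n, 1 ≤ n → (A n).Finite)
    (hcard : ∀ n, 1 ≤ n → ((A n).ncard : ℝ) ≤ K * n) {c : ℝ} (hc : 0 < c) :
    dimH (limsup (fun n : ℕ => ⋃ a ∈ A n, ball a (Real.exp (-c * n))) atTop) = 0 := by
  borelize X
  refine dimH_eq_zero_of_forall_hausdorffMeasure_eq_zero fun d hd => ?_
  have hd : (0 : ℝ) < d := hd
  set ρ : ℕ → ℝ := fun n => Real.exp (-c * ↑(n + 1))
  have hρ_anti : Antitone ρ := fun m n hmn =>
    Real.exp_le_exp.2 (mul_le_mul_of_nonpos_left (by gcongr) (neg_nonpos.2 hc.le))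
  have hρ : Tendsto ρ atTop (𝓝 0) := Real.tendsto_exp_atBot.comp <|
    (tendsto_natCast_atTop_atTop.comp (tendsto_add_atTop_nat 1)).const_mul_atTop_of_neg
      (neg_lt_zero.2 hc)
  have hsum : Summable fun n => (A (n + 1)).ncard * (2 * ρ n) ^ (d : ℝ) :=
    ((summable_nat_add_iff 1).2 (summable_mul_two_mul_exp_rpow K hc hd)).of_nonneg_of_le
      (fun n => by positivity) fun n => by gcongr; exact hcard _ n.succ_pos
  -- `A 0` is unconstrained, so drop the index `0`.
  rw [← limsup_nat_add _ 1]
  exact hausdorffMeasure_limsup_biUnion_ball_eq_zero _ hd.le (fun n => hfin _ n.succ_pos)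
    hρ_anti hρ hsum

theorem mem_limsup_biUnion_ball_exp {X : Type*} [PseudoMetricSpace X] {A : ℕ → Set X} {z : X}
    {c δ : ℝ} (hcδ : c ≤ δ)
    (h : ∀ N : ℕ, 1 ≤ N → ∃ n ≥ N, (ball z (Real.exp (-δ * n)) ∩ A n).Nonempty) :
    z ∈ limsup (fun n : ℕ => ⋃ a ∈ A n, ball a (Real.exp (-c * n))) atTop := by
  refine mem_limsup_iff_frequently_mem.2 (frequently_atTop.2 fun N => ?_)
  obtain ⟨n, hn, a, haz, ha⟩ := h (N + 1) N.succ_pos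
  refine ⟨n, by omega, mem_iUnion₂.2 ⟨a, ha, mem_ball_comm.1 (ball_subset_ball ?_ haz)⟩⟩
  gcongr

theorem non_safe_points_dimH_zero_general {X : Type*} [MetricSpace X]
    (K : ℝ) (A : ℕ → Set X)
    (hfin : ∀ n : ℕ, 1 ≤ n → (A n).Finite)
    (hcard : ∀ n : ℕ, 1 ≤ n → ((A n).ncard : ℝ) ≤ K * n) :
    dimH {z : X | ¬ ((∀ n : ℕ, 1 ≤ n → z ∉ A n) ∧
      ∀ δ > (0 : ℝ), ∃ N : ℕ, 1 ≤ N ∧ ∀ n ≥ N,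
        ball z (Real.exp (-δ * n)) ∩ A n = ∅)} = 0 := by
  set L : ℕ → Set X := fun k =>
    limsup (fun n : ℕ => ⋃ a ∈ A n, ball a (Real.exp (-(1 / (k + 1 : ℝ)) * n))) atTop
  have hsub : {z : X | ¬ ((∀ n : ℕ, 1 ≤ n → z ∉ A n) ∧
      ∀ δ > (0 : ℝ), ∃ N : ℕ, 1 ≤ N ∧ ∀ n ≥ N, ball z (Real.exp (-δ * n)) ∩ A n = ∅)} ⊆
      (⋃ n, ⋃ (_ : 1 ≤ n), A n) ∪ ⋃ k, L k := by
    intro z hz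
    rw [mem_ofPred, not_and_or] at hz
    push Not at hz
    rcases hz with ⟨n, hn, hzn⟩ | ⟨δ, hδ, hfreq⟩
    · exact Or.inl (mem_iUnion₂.2 ⟨n, hn, hzn⟩)
    · obtain ⟨k, hk⟩ := exists_nat_one_div_lt hδ
      exact Or.inr (mem_iUnion.2 ⟨k, mem_limsup_biUnion_ball_exp hk.le hfreq⟩)
  have hcount : (⋃ n, ⋃ (_ : 1 ≤ n), A n).Countable :=
    countable_iUnion fun n => countable_iUnion fun hn => (hfin n hn).countable
  have hL (k : ℕ) : dimH (L k) = 0 :=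
    dimH_limsup_biUnion_ball_exp_eq_zero K hfin hcard Nat.one_div_pos_of_nat
  refine nonpos_iff_eq_zero.1 ((dimH_mono hsub).trans_eq ?_)
  simp [dimH_countable hcount, hL]

/-- **Safe points have full dimension complement zero.** Let `A n ⊆ X` be finite sets
with `card (A n) ≤ K * n` for `n ≥ 1` (`K ≥ 1`). A point `z` is *safe* if
`z ∉ ⋃_{n ≥ 1} A n` and for every `δ > 0`, for all large `n`, the ball
`B(z, e^{-δ n})` is disjoint from `A n`. Then the set of non-safe points has
Hausdorff dimension `0`. -/
theorem non_safe_points_dimH_zero {X : Type*} [MetricSpace X]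
    (K : ℝ) (hK : 1 ≤ K) (A : ℕ → Set X)
    (hfin : ∀ n : ℕ, 1 ≤ n → (A n).Finite)
    (hcard : ∀ n : ℕ, 1 ≤ n → ((A n).ncard : ℝ) ≤ K * n) :
    dimH {z : X | ¬ ((∀ n : ℕ, 1 ≤ n → z ∉ A n) ∧
      ∀ δ > (0 : ℝ), ∃ N : ℕ, 1 ≤ N ∧ ∀ n ≥ N,
        ball z (Real.exp (-δ * n)) ∩ A n = ∅)} = 0 :=
  non_safe_points_dimH_zero_general K A hfin hcard
end
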